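/- Theorem (properties of the hypothesis): given an observation table O = (S, S₊, R, E, f, N) and an assignment of reset variables b_ω and location variables q_ω ∈ {1,…,N} satisfying constraints C₁ ∧ C₂ ∧ C₃ ∧ C₄, the constructed hypothesis H satisfies: (1) H is deterministic; (2) for each row ω ∈ S ∪ S₊ ∪ R, the location reached by ω in H equals q_ω; (3) H accepts ω iff MQ(ω) = +; (4) if f evaluated on rows ω₁, ω₂ under the assigned resets is ⊥, then ω₁ and ω₂ reach distinct locations in H. -/

import Mathlib

/-- A run of a one-clock timed automaton with transition relation `Δ`
(`(q, σ, guard, reset, q') ∈ Δ`) from a state `(q, ν)` over a timed word,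
recording the trace of (reset bit, location, clock value) after each step. -/
inductive Run {Q A : Type} (Δ : Set (Q × A × Set ℝ × Bool × Q)) :
    (Q × ℝ) → List (A × ℝ) → List (Bool × Q × ℝ) → Prop
  | nil (s : Q × ℝ) : Run Δ s [] []
  | cons {q : Q} {v : ℝ} {a : A} {t : ℝ} {φ : Set ℝ} {b : Bool} {q' : Q}
      {ω : List (A × ℝ)} {tr : List (Bool × Q × ℝ)} :
      (q, a, φ, b, q') ∈ Δ → 0 ≤ t → v + t ∈ φ →
      Run Δ (q', if b then 0 else v + t) ω tr →
      Run Δ (q, v) ((a, t) :: ω) ((b, q', if b then 0 else v + t) :: tr)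

/-- The state reached at the end of a run with trace `tr` starting from `s`. -/
def endState {Q : Type} (s : Q × ℝ) (tr : List (Bool × Q × ℝ)) : Q × ℝ :=
  match tr.getLast? with
  | some (_, q, v) => (q, v)
  | none => s

/-- The alignment construction: `align1 ν₁ ν₂ e` is the suffix attached to the
word with clock value `ν₁`, obtained from `e` by adding `ν₂ - ν₁` to the first
delay when `ν₁ < ν₂`, and leaving `e` unchanged otherwise. -/
noncomputable def align1 {A : Type} (ν₁ ν₂ : ℝ) : List (A × ℝ) → List (A × ℝ)
  | [] => []
  | (a, t) :: rest =>
      if ν₁ < ν₂ then (a, t + (ν₂ - ν₁)) :: rest else (a, t) :: rest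

/-- A timed word is accepted iff its run from the initial state ends in an
accepting location. -/
def Accepted {Q A : Type} (Δ : Set (Q × A × Set ℝ × Bool × Q)) (q0 : Q)
    (acc : Set Q) (ω : List (A × ℝ)) : Prop :=
  ∃ tr, Run Δ (q0, 0) ω tr ∧ (endState (q0, 0) tr).1 ∈ acc

/-- `clockVal ω k` : clock value after `ω` if the last reset is at position `k`. -/
def clockVal {A : Type} (ω : List (A × ℝ)) (k : ℕ) : ℝ :=
  ((ω.drop k).map (·.2)).sum

/-- The regions with maximum constant `κ`, and same-region relation. -/
def Regions (κ : ℕ) : Set (Set ℝ) :=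
  {r | (∃ n : ℕ, n ≤ κ ∧ r = Set.Icc (n : ℝ) n) ∨
       (∃ n : ℕ, n < κ ∧ r = Set.Ioo (n : ℝ) ((n : ℝ) + 1)) ∨
       r = Set.Ioi (κ : ℝ)}

def SameRegion (κ : ℕ) (x y : ℝ) : Prop :=
  ∃ r ∈ Regions κ, x ∈ r ∧ y ∈ r

/-- The last reset of row `ω` determined by the ending-reset variables `bvar`. -/
def lastResetAssign {A : Type} (bvar : List (A × ℝ) → Bool)
    (ω : List (A × ℝ)) (k : ℕ) : Prop :=
  k ≤ ω.length ∧ bvar (ω.take k) = true ∧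
    ∀ j, k < j → j ≤ ω.length → bvar (ω.take j) = false

/-- The table function `f`: rows `ω₁, ω₂` are (currently) indistinguishable
under last resets `i, j` iff all aligned membership tests on suffixes in `E`
agree. -/
def rowsEquiv {A : Type} (MQ : List (A × ℝ) → Bool) (E : Finset (List (A × ℝ)))
    (ω₁ ω₂ : List (A × ℝ)) (i j : ℕ) : Prop :=
  ∀ e ∈ E, MQ (ω₁ ++ align1 (clockVal ω₁ i) (clockVal ω₂ j) e)
         = MQ (ω₂ ++ align1 (clockVal ω₂ j) (clockVal ω₁ i) e)

/-!
Every row `ω · (σ, t)` of the table becomes a transition out of location `qvar ω`, taken at the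
clock value `ω` has under its assigned last reset, and resetting as `bvar` prescribes. By C₁ two
rows in the same location pass all membership tests alike, so by C₂ (the same clock value lies
in the same region) two such transitions that can fire together coincide: the hypothesis is
deterministic. Induction along a row then shows that its unique run follows the transitions
contributed by its prefixes, ending in `qvar ω` with the clock value fixed by the last reset;
(2), (4) and, through the suffix `ε ∈ E`, (3) follow.
-/

section Runs

variable {Q A : Type} {Δ : Set (Q × A × Set ℝ × Bool × Q)}

theorem endState_append_singleton (s : Q × ℝ) (tr : List (Bool × Q × ℝ)) (b : Bool) (q : Q)
    (v : ℝ) : endState s (tr ++ [(b, q, v)]) = (q, v) := by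
  simp [endState]

theorem endState_cons (s : Q × ℝ) (x : Bool × Q × ℝ) (tr : List (Bool × Q × ℝ)) :
    endState s (x :: tr) = endState (x.2.1, x.2.2) tr := by
  cases tr with
  | nil => rfl
  | cons y tr => simp only [endState, List.getLast?_cons_cons, Prod.mk.eta]; rfl

theorem Run.append_singleton {s : Q × ℝ} {ω : List (A × ℝ)} {tr : List (Bool × Q × ℝ)}
    (h : Run Δ s ω tr) {a : A} {t : ℝ} {φ : Set ℝ} {b : Bool} {q' : Q}
    (hmem : ((endState s tr).1, a, φ, b, q') ∈ Δ) (ht : 0 ≤ t) (hφ : (endState s tr).2 + t ∈ φ) :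
    Run Δ s (ω ++ [(a, t)]) (tr ++ [(b, q', if b then 0 else (endState s tr).2 + t)]) := by
  induction h with
  | nil s => exact Run.cons hmem ht hφ (Run.nil _)
  | cons h₁ h₂ h₃ _ ih =>
      rw [endState_cons] at hmem hφ ⊢
      exact Run.cons h₁ h₂ h₃ (ih hmem hφ)

theorem Run.of_append_singleton {s : Q × ℝ} {ω : List (A × ℝ)} {tr : List (Bool × Q × ℝ)}
    {a : A} {t : ℝ} (h : Run Δ s (ω ++ [(a, t)]) tr) :
    ∃ tr₀ φ b q', tr = tr₀ ++ [(b, q', if b then 0 else (endState s tr₀).2 + t)] ∧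
      Run Δ s ω tr₀ ∧ ((endState s tr₀).1, a, φ, b, q') ∈ Δ ∧ (endState s tr₀).2 + t ∈ φ := by
  induction ω generalizing s tr with
  | nil =>
      obtain _ | ⟨h₁, -, h₃, h₄⟩ := h
      cases h₄
      exact ⟨[], _, _, _, rfl, Run.nil _, h₁, h₃⟩
  | cons x ω ih =>
      obtain _ | ⟨h₁, h₂, h₃, h₄⟩ := h
      obtain ⟨tr₀, φ, b, q', rfl, hrun, hmem, hφ⟩ := ih h₄
      refine ⟨_ :: tr₀, φ, b, q', by rw [endState_cons]; rfl, Run.cons h₁ h₂ h₃ hrun, ?_, ?_⟩ <;>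
        rwa [endState_cons]

end Runs

section LastReset

variable {A : Type} {bvar : List (A × ℝ) → Bool} {ω : List (A × ℝ)}

theorem exists_lastResetAssign (hbε : bvar [] = true) (ω : List (A × ℝ)) :
    ∃ k, lastResetAssign bvar ω k := by
  classical
  let P k := bvar (ω.take k) = true
  refine ⟨Nat.findGreatest P ω.length, Nat.findGreatest_le _,
    Nat.findGreatest_spec (P := P) (m := 0) (Nat.zero_le _) (by simpa [P] using hbε), ?_⟩
  intro j hj hjω
  simpa [P] using Nat.findGreatest_is_greatest hj hjω

theorem lastResetAssign_unique {k₁ k₂ : ℕ} (h₁ : lastResetAssign bvar ω k₁)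
    (h₂ : lastResetAssign bvar ω k₂) : k₁ = k₂ := by
  by_contra hne
  rcases Nat.lt_or_gt_of_ne hne with h | h
  · simpa [h₂.2.1] using h₁.2.2 k₂ h h₂.1
  · simpa [h₁.2.1] using h₂.2.2 k₁ h h₁.1

theorem lastResetAssign_length (hb : bvar ω = true) : lastResetAssign bvar ω ω.length :=
  ⟨le_rfl, by rwa [List.take_length], fun _ hj hjω => absurd hjω (not_le.mpr hj)⟩

theorem lastResetAssign_append_singleton {k : ℕ} {x : A × ℝ} (h : lastResetAssign bvar ω k)
    (hb : bvar (ω ++ [x]) = false) : lastResetAssign bvar (ω ++ [x]) k := by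
  obtain ⟨hk, hbk, hlast⟩ := h
  have hlen : (ω ++ [x]).length = ω.length + 1 := by simp
  refine ⟨by omega, by rwa [List.take_append_of_le_length hk], fun j hj hjω => ?_⟩
  rcases Nat.lt_or_ge j (ω.length + 1) with hjlt | hjge
  · rw [List.take_append_of_le_length (by omega)]
    exact hlast j hj (by omega)
  · rwa [List.take_of_length_le (by omega)]

theorem clockVal_length (ω : List (A × ℝ)) : clockVal ω ω.length = 0 := by
  simp [clockVal]

theorem clockVal_append_singleton {k : ℕ} (hk : k ≤ ω.length)
    (a : A) (t : ℝ) : clockVal (ω ++ [(a, t)]) k = clockVal ω k + t := by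
  simp [clockVal, List.drop_append_of_le_length hk]

theorem clockVal_append_singleton_of_lastResetAssign {i₀ i : ℕ} {a : A} {t : ℝ}
    (h₀ : lastResetAssign bvar ω i₀) (h : lastResetAssign bvar (ω ++ [(a, t)]) i) :
    clockVal (ω ++ [(a, t)]) i = if bvar (ω ++ [(a, t)]) then 0 else clockVal ω i₀ + t := by
  cases hb : bvar (ω ++ [(a, t)])
  · rw [lastResetAssign_unique h (lastResetAssign_append_singleton h₀ hb)]
    exact clockVal_append_singleton h₀.1 a t
  · rw [lastResetAssign_unique h (lastResetAssign_length hb)]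
    exact clockVal_length _

end LastReset

theorem clockVal_nonneg {A : Type} {ω : List (A × ℝ)} (hω : ∀ p ∈ ω, 0 ≤ p.2) (k : ℕ) :
    0 ≤ clockVal ω k :=
  List.sum_nonneg fun _ hx => by
    obtain ⟨p, hp, rfl⟩ := List.mem_map.mp hx
    exact hω p (List.drop_subset k ω hp)

theorem sameRegion_refl (κ : ℕ) {x : ℝ} (hx : 0 ≤ x) : SameRegion κ x x := by
  rcases lt_or_ge (κ : ℝ) x with hκ | hκ
  · exact ⟨Set.Ioi (κ : ℝ), Or.inr (Or.inr rfl), hκ, hκ⟩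
  obtain ⟨n, hn⟩ : ∃ n : ℕ, ⌊x⌋ = n := Int.eq_ofNat_of_zero_le (Int.floor_nonneg.mpr hx)
  have hnx : (n : ℝ) ≤ x := by simpa [hn] using Int.floor_le x
  have hxn : x < n + 1 := by simpa [hn] using Int.lt_floor_add_one x
  rcases hnx.eq_or_lt with rfl | hlt
  · exact ⟨Set.Icc (n : ℝ) n, Or.inl ⟨n, by exact_mod_cast hκ, rfl⟩, by simp, by simp⟩
  · have hnκ : n < κ := by exact_mod_cast hlt.trans_le hκ
    exact ⟨Set.Ioo (n : ℝ) (n + 1), Or.inr (Or.inl ⟨n, hnκ, rfl⟩), ⟨hlt, hxn⟩, ⟨hlt, hxn⟩⟩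

theorem rowsEquiv.eq {A : Type} {MQ : List (A × ℝ) → Bool} {E : Finset (List (A × ℝ))}
    {ω₁ ω₂ : List (A × ℝ)} {i j : ℕ} (h : rowsEquiv MQ E ω₁ ω₂ i j) (hεE : [] ∈ E) :
    MQ ω₁ = MQ ω₂ := by
  simpa [align1] using h [] hεE

section Hypothesis

variable {A : Type} (T : Set (List (A × ℝ))) (bvar : List (A × ℝ) → Bool)
  (qvar : List (A × ℝ) → ℕ)

def ExtensionsAgree : Prop :=
  ∀ ω₁ ∈ T, ∀ ω₂ ∈ T, ∀ (σ : A) (t₁ t₂ : ℝ), ω₁ ++ [(σ, t₁)] ∈ T → ω₂ ++ [(σ, t₂)] ∈ T →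
    ∀ i j, lastResetAssign bvar ω₁ i → lastResetAssign bvar ω₂ j → qvar ω₁ = qvar ω₂ →
    clockVal ω₁ i + t₁ = clockVal ω₂ j + t₂ → 0 ≤ clockVal ω₁ i + t₁ →
    bvar (ω₁ ++ [(σ, t₁)]) = bvar (ω₂ ++ [(σ, t₂)]) ∧
      qvar (ω₁ ++ [(σ, t₁)]) = qvar (ω₂ ++ [(σ, t₂)])

/-- Guards are single points: a run of a row only tests the clock values recorded in the table. -/
def hypothesisDelta : Set (ℕ × A × Set ℝ × Bool × ℕ) :=
  {x | ∃ ω σ t i, ω ∈ T ∧ ω ++ [(σ, t)] ∈ T ∧ lastResetAssign bvar ω i ∧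
    x = (qvar ω, σ, {clockVal ω i + t}, bvar (ω ++ [(σ, t)]), qvar (ω ++ [(σ, t)]))}

variable {T bvar qvar}

theorem extensionsAgree_of_consistent {MQ : List (A × ℝ) → Bool} {E : Finset (List (A × ℝ))}
    {κ : ℕ}
    (hC1 : ∀ ω₁ ∈ T, ∀ ω₂ ∈ T, ∀ i j,
      lastResetAssign bvar ω₁ i → lastResetAssign bvar ω₂ j →
      ¬ rowsEquiv MQ E ω₁ ω₂ i j → qvar ω₁ ≠ qvar ω₂)
    (hC2 : ∀ ω₁ ∈ T, ∀ ω₂ ∈ T, ∀ (σ : A) (t₁ t₂ : ℝ),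
      ω₁ ++ [(σ, t₁)] ∈ T → ω₂ ++ [(σ, t₂)] ∈ T →
      ∀ i j, lastResetAssign bvar ω₁ i → lastResetAssign bvar ω₂ j →
      rowsEquiv MQ E ω₁ ω₂ i j →
      SameRegion κ (clockVal ω₁ i + t₁) (clockVal ω₂ j + t₂) →
      qvar ω₁ = qvar ω₂ →
      bvar (ω₁ ++ [(σ, t₁)]) = bvar (ω₂ ++ [(σ, t₂)]) ∧
        qvar (ω₁ ++ [(σ, t₁)]) = qvar (ω₂ ++ [(σ, t₂)])) :
    ExtensionsAgree T bvar qvar := by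
  intro ω₁ hω₁ ω₂ hω₂ σ t₁ t₂ hx₁ hx₂ i j hi hj hq heq hnonneg
  have hequiv : rowsEquiv MQ E ω₁ ω₂ i j :=
    not_not.mp fun hne => hC1 ω₁ hω₁ ω₂ hω₂ i j hi hj hne hq
  refine hC2 ω₁ hω₁ ω₂ hω₂ σ t₁ t₂ hx₁ hx₂ i j hi hj hequiv ?_ hq
  rw [← heq]
  exact sameRegion_refl κ hnonneg

theorem mem_hypothesisDelta {q : ℕ} {a : A} {φ : Set ℝ} {b : Bool} {q' : ℕ} :
    (q, a, φ, b, q') ∈ hypothesisDelta T bvar qvar ↔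
      ∃ ω t i, ω ∈ T ∧ ω ++ [(a, t)] ∈ T ∧ lastResetAssign bvar ω i ∧ q = qvar ω ∧
        φ = {clockVal ω i + t} ∧ b = bvar (ω ++ [(a, t)]) ∧ q' = qvar (ω ++ [(a, t)]) := by
  simp only [hypothesisDelta, Set.mem_ofPred_eq, Prod.ext_iff]
  constructor
  · rintro ⟨ω, σ, t, i, hω, hx, hi, hq, rfl, hφ, hb, hq'⟩
    exact ⟨ω, t, i, hω, hx, hi, hq, hφ, hb, hq'⟩
  · rintro ⟨ω, t, i, hω, hx, hi, hq, hφ, hb, hq'⟩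
    exact ⟨ω, a, t, i, hω, hx, hi, hq, rfl, hφ, hb, hq'⟩

theorem hypothesisDelta_deterministic (h : ExtensionsAgree T bvar qvar) (q : ℕ) (a : A)
    (φ : Set ℝ) (b : Bool) (q' : ℕ) (φ' : Set ℝ) (b' : Bool) (q'' : ℕ)
    (h₁ : (q, a, φ, b, q') ∈ hypothesisDelta T bvar qvar)
    (h₂ : (q, a, φ', b', q'') ∈ hypothesisDelta T bvar qvar) (hne : (φ, b, q') ≠ (φ', b', q'')) :
    φ ∩ φ' ∩ Set.Ici (0 : ℝ) = ∅ := by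
  obtain ⟨ω₁, t₁, i, hω₁, hx₁, hi, rfl, rfl, rfl, rfl⟩ := mem_hypothesisDelta.mp h₁
  obtain ⟨ω₂, t₂, j, hω₂, hx₂, hj, hq, rfl, rfl, rfl⟩ := mem_hypothesisDelta.mp h₂
  refine Set.eq_empty_of_forall_notMem fun x ⟨⟨hx, hx'⟩, hx0⟩ => hne ?_
  rw [Set.mem_singleton_iff] at hx hx'
  obtain ⟨hb, hq'⟩ := h ω₁ hω₁ ω₂ hω₂ a t₁ t₂ hx₁ hx₂ i j hi hj hq (hx.symm.trans hx') (hx ▸ hx0)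
  rw [← hx, ← hx', hb, hq']

theorem hypothesisDelta_locations_lt {N : ℕ} (hN : ∀ ω ∈ T, qvar ω < N) (q : ℕ) (a : A)
    (φ : Set ℝ) (b : Bool) (q' : ℕ) (h : (q, a, φ, b, q') ∈ hypothesisDelta T bvar qvar) :
    q < N ∧ q' < N := by
  obtain ⟨ω, t, i, hω, hx, -, rfl, -, -, rfl⟩ := mem_hypothesisDelta.mp h
  exact ⟨hN ω hω, hN _ hx⟩

variable (hpre : ∀ ω x, ω ++ [x] ∈ T → ω ∈ T) (hpos : ∀ ω ∈ T, ∀ p ∈ ω, 0 ≤ p.2)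
  (hbε : bvar [] = true)
include hpre hpos hbε

theorem exists_run_hypothesisDelta {ω : List (A × ℝ)} (hω : ω ∈ T) {i : ℕ}
    (hi : lastResetAssign bvar ω i) :
    ∃ tr, Run (hypothesisDelta T bvar qvar) (qvar [], 0) ω tr ∧
      endState (qvar [], 0) tr = (qvar ω, clockVal ω i) := by
  induction ω using List.reverseRecOn generalizing i with
  | nil =>
      obtain rfl : i = 0 := Nat.le_zero.mp hi.1
      exact ⟨[], Run.nil _, by simp [endState, clockVal]⟩
  | append_singleton ω₀ x ih =>
      obtain ⟨a, t⟩ := x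
      have hω₀ := hpre ω₀ _ hω
      obtain ⟨i₀, hi₀⟩ := exists_lastResetAssign hbε ω₀
      obtain ⟨tr₀, hrun₀, hend₀⟩ := ih hω₀ hi₀
      have hmem : (qvar ω₀, a, {clockVal ω₀ i₀ + t}, bvar (ω₀ ++ [(a, t)]),
          qvar (ω₀ ++ [(a, t)])) ∈ hypothesisDelta T bvar qvar :=
        ⟨ω₀, a, t, i₀, hω₀, hω, hi₀, rfl⟩
      refine ⟨_, hrun₀.append_singleton (by rw [hend₀]; exact hmem) (hpos _ hω (a, t) (by simp))
        (by rw [hend₀]; rfl), ?_⟩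
      rw [endState_append_singleton, hend₀, clockVal_append_singleton_of_lastResetAssign hi₀ hi]

theorem endState_of_run_hypothesisDelta (hagree : ExtensionsAgree T bvar qvar)
    {ω : List (A × ℝ)} (hω : ω ∈ T) {i : ℕ} (hi : lastResetAssign bvar ω i)
    {tr : List (Bool × ℕ × ℝ)} (hrun : Run (hypothesisDelta T bvar qvar) (qvar [], 0) ω tr) :
    endState (qvar [], 0) tr = (qvar ω, clockVal ω i) := by
  induction ω using List.reverseRecOn generalizing i tr with
  | nil =>
      obtain rfl : i = 0 := Nat.le_zero.mp hi.1
      cases hrun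
      simp [endState, clockVal]
  | append_singleton ω₀ x ih =>
      obtain ⟨a, t⟩ := x
      have hω₀ := hpre ω₀ _ hω
      obtain ⟨i₀, hi₀⟩ := exists_lastResetAssign hbε ω₀
      obtain ⟨tr₀, φ, b, q', rfl, hrun₀, hmem, hφ⟩ := hrun.of_append_singleton
      rw [ih hω₀ hi₀ hrun₀] at hmem hφ ⊢
      obtain ⟨ω', t', i', hω', hx', hi', hq, rfl, rfl, rfl⟩ := mem_hypothesisDelta.mp hmem
      have hnonneg : 0 ≤ clockVal ω₀ i₀ + t :=
        add_nonneg (clockVal_nonneg (hpos ω₀ hω₀) i₀) (hpos _ hω (a, t) (by simp))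
      obtain ⟨hb, hq'⟩ := hagree ω₀ hω₀ ω' hω' a t t' hω hx' i₀ i' hi₀ hi' hq
        (Set.mem_singleton_iff.mp hφ) hnonneg
      rw [endState_append_singleton, clockVal_append_singleton_of_lastResetAssign hi₀ hi, hb, hq']

end Hypothesis

theorem hypothesis_properties_general {A : Type} [DecidableEq A]
    (MQ : List (A × ℝ) → Bool)
    (S Splus R E : Finset (List (A × ℝ)))
    (N κ : ℕ)
    (hεE : [] ∈ E)
    (hpos : ∀ ω ∈ S ∪ Splus ∪ R, ∀ p ∈ ω, 0 ≤ p.2)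
    (hpc : ∀ ω ∈ S ∪ Splus ∪ R, ∀ k, ω.take k ∈ S ∪ Splus ∪ R)
    (bvar : List (A × ℝ) → Bool) (qvar : List (A × ℝ) → ℕ)
    (hbε : bvar [] = true)
    -- C₁ : distinguished rows get distinct locations
    (hC1 : ∀ ω₁ ∈ S ∪ Splus ∪ R, ∀ ω₂ ∈ S ∪ Splus ∪ R, ∀ i j,
      lastResetAssign bvar ω₁ i → lastResetAssign bvar ω₂ j →
      ¬ rowsEquiv MQ E ω₁ ω₂ i j → qvar ω₁ ≠ qvar ω₂)
    -- C₂ : consistency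
    (hC2 : ∀ ω₁ ∈ S ∪ Splus ∪ R, ∀ ω₂ ∈ S ∪ Splus ∪ R, ∀ (σ : A) (t₁ t₂ : ℝ),
      ω₁ ++ [(σ, t₁)] ∈ S ∪ Splus ∪ R → ω₂ ++ [(σ, t₂)] ∈ S ∪ Splus ∪ R →
      ∀ i j, lastResetAssign bvar ω₁ i → lastResetAssign bvar ω₂ j →
      rowsEquiv MQ E ω₁ ω₂ i j →
      SameRegion κ (clockVal ω₁ i + t₁) (clockVal ω₂ j + t₂) →
      qvar ω₁ = qvar ω₂ →
      bvar (ω₁ ++ [(σ, t₁)]) = bvar (ω₂ ++ [(σ, t₂)]) ∧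
        qvar (ω₁ ++ [(σ, t₁)]) = qvar (ω₂ ++ [(σ, t₂)]))
    -- C₃ : closedness and location bounds
    (hC3 : (∀ k < N, ∃ ω ∈ S ∪ Splus, qvar ω = k) ∧
      ∀ ω ∈ S ∪ Splus ∪ R, qvar ω < N) :
    ∃ (Δ : Set (ℕ × A × Set ℝ × Bool × ℕ)) (acc : Set ℕ),
      -- (1) the hypothesis is deterministic
      (∀ q a φ b q' φ' b' q'',
        (q, a, φ, b, q') ∈ Δ → (q, a, φ', b', q'') ∈ Δ →
        (φ, b, q') ≠ (φ', b', q'') → φ ∩ φ' ∩ Set.Ici (0 : ℝ) = ∅) ∧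
      (∀ q a φ b q', (q, a, φ, b, q') ∈ Δ → q < N ∧ q' < N) ∧
      -- (2) each row reaches its assigned location
      (∀ ω ∈ S ∪ Splus ∪ R, ∃ tr, Run Δ (qvar [], 0) ω tr ∧
        (endState (qvar [], 0) tr).1 = qvar ω) ∧
      -- (3) acceptance agrees with membership queries on rows
      (∀ ω ∈ S ∪ Splus ∪ R, (Accepted Δ (qvar []) acc ω ↔ MQ ω = true)) ∧
      -- (4) rows distinguished by `f` reach distinct locations
      (∀ ω₁ ∈ S ∪ Splus ∪ R, ∀ ω₂ ∈ S ∪ Splus ∪ R, ∀ i j,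
        lastResetAssign bvar ω₁ i → lastResetAssign bvar ω₂ j →
        ¬ rowsEquiv MQ E ω₁ ω₂ i j →
        ∀ tr₁ tr₂, Run Δ (qvar [], 0) ω₁ tr₁ → Run Δ (qvar [], 0) ω₂ tr₂ →
          (endState (qvar [], 0) tr₁).1 ≠ (endState (qvar [], 0) tr₂).1) := by
  let T : Set (List (A × ℝ)) := ↑(S ∪ Splus ∪ R)
  have hpre : ∀ ω x, ω ++ [x] ∈ T → ω ∈ T := fun ω x h => by
    have := hpc _ h ω.length
    rwa [List.take_left] at this
  have hagree : ExtensionsAgree T bvar qvar := extensionsAgree_of_consistent hC1 hC2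
  have hend {ω} (hω : ω ∈ T) {i} (hi : lastResetAssign bvar ω i) {tr} :=
    endState_of_run_hypothesisDelta (tr := tr) hpre hpos hbε hagree hω hi
  refine ⟨hypothesisDelta T bvar qvar, {m | ∃ ω ∈ T, qvar ω = m ∧ MQ ω = true},
    hypothesisDelta_deterministic hagree, hypothesisDelta_locations_lt hC3.2, ?_, ?_, ?_⟩
  · intro ω hω
    obtain ⟨i, hi⟩ := exists_lastResetAssign hbε ω
    obtain ⟨tr, hrun, hω_end⟩ := exists_run_hypothesisDelta hpre hpos hbε hω hi
    exact ⟨tr, hrun, by rw [hω_end]⟩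
  · intro ω hω
    obtain ⟨i, hi⟩ := exists_lastResetAssign hbε ω
    obtain ⟨tr, hrun, hω_end⟩ := exists_run_hypothesisDelta hpre hpos hbε hω hi
    constructor
    · rintro ⟨tr', hrun', ω', hω', hq, hMQ⟩
      obtain ⟨i', hi'⟩ := exists_lastResetAssign hbε ω'
      rw [hend hω hi hrun'] at hq
      have hequiv : rowsEquiv MQ E ω ω' i i' :=
        not_not.mp fun hne => hC1 ω hω ω' hω' i i' hi hi' hne hq.symm
      rw [hequiv.eq hεE, hMQ]
    · exact fun hMQ => ⟨tr, hrun, ω, hω, by rw [hω_end], hMQ⟩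
  · intro ω₁ hω₁ ω₂ hω₂ i j hi hj hne tr₁ tr₂ hrun₁ hrun₂
    rw [hend hω₁ hi hrun₁, hend hω₂ hj hrun₂]
    exact hC1 ω₁ hω₁ ω₂ hω₂ i j hi hj hne

/-- Properties of the hypothesis automaton: given an observation table
`(S, S₊, R, E, f, N)` and an assignment of ending-reset variables `bvar` and
location variables `qvar` satisfying the constraints C₁–C₄, there is a
hypothesis DOTA `H` (with locations `0, …, N-1`, initial location `qvar ε`,
transitions `Δ` and accepting locations `acc`) such that: (1) `H` is
deterministic; (2) every row `ω` reaches location `qvar ω` in `H`; (3) `H`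
accepts a row `ω` iff `MQ ω = +`; and (4) rows distinguished by `f` under the
assigned resets reach distinct locations of `H`. -/
theorem hypothesis_properties {A : Type} [DecidableEq A]
    (MQ : List (A × ℝ) → Bool)
    (S Splus R E : Finset (List (A × ℝ)))
    (N κ : ℕ)
    (hd1 : Disjoint S Splus) (hd2 : Disjoint S R) (hd3 : Disjoint Splus R)
    (hεS : [] ∈ S) (hεE : [] ∈ E)
    (hpos : ∀ ω ∈ S ∪ Splus ∪ R, ∀ p ∈ ω, 0 ≤ p.2)
    (hEpos : ∀ e ∈ E, ∀ p ∈ e, 0 ≤ p.2)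
    (hpc : ∀ ω ∈ S ∪ Splus ∪ R, ∀ k, ω.take k ∈ S ∪ Splus ∪ R)
    (hext : ∀ ω ∈ S ∪ Splus, ∀ σ : A, ω ++ [(σ, 0)] ∈ S ∪ Splus ∪ R)
    (bvar : List (A × ℝ) → Bool) (qvar : List (A × ℝ) → ℕ)
    (hbε : bvar [] = true)
    -- C₁ : distinguished rows get distinct locations
    (hC1 : ∀ ω₁ ∈ S ∪ Splus ∪ R, ∀ ω₂ ∈ S ∪ Splus ∪ R, ∀ i j,
      lastResetAssign bvar ω₁ i → lastResetAssign bvar ω₂ j →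
      ¬ rowsEquiv MQ E ω₁ ω₂ i j → qvar ω₁ ≠ qvar ω₂)
    -- C₂ : consistency
    (hC2 : ∀ ω₁ ∈ S ∪ Splus ∪ R, ∀ ω₂ ∈ S ∪ Splus ∪ R, ∀ (σ : A) (t₁ t₂ : ℝ),
      ω₁ ++ [(σ, t₁)] ∈ S ∪ Splus ∪ R → ω₂ ++ [(σ, t₂)] ∈ S ∪ Splus ∪ R →
      ∀ i j, lastResetAssign bvar ω₁ i → lastResetAssign bvar ω₂ j →
      rowsEquiv MQ E ω₁ ω₂ i j →
      SameRegion κ (clockVal ω₁ i + t₁) (clockVal ω₂ j + t₂) →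
      qvar ω₁ = qvar ω₂ →
      bvar (ω₁ ++ [(σ, t₁)]) = bvar (ω₂ ++ [(σ, t₂)]) ∧
        qvar (ω₁ ++ [(σ, t₁)]) = qvar (ω₂ ++ [(σ, t₂)]))
    -- C₃ : closedness and location bounds
    (hC3 : (∀ k < N, ∃ ω ∈ S ∪ Splus, qvar ω = k) ∧
      ∀ ω ∈ S ∪ Splus ∪ R, qvar ω < N)
    -- C₄ : rows of S get pairwise distinct locations
    (hC4 : ∀ ω₁ ∈ S, ∀ ω₂ ∈ S, qvar ω₁ = qvar ω₂ → ω₁ = ω₂) :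
    ∃ (Δ : Set (ℕ × A × Set ℝ × Bool × ℕ)) (acc : Set ℕ),
      -- (1) the hypothesis is deterministic
      (∀ q a φ b q' φ' b' q'',
        (q, a, φ, b, q') ∈ Δ → (q, a, φ', b', q'') ∈ Δ →
        (φ, b, q') ≠ (φ', b', q'') → φ ∩ φ' ∩ Set.Ici (0 : ℝ) = ∅) ∧
      (∀ q a φ b q', (q, a, φ, b, q') ∈ Δ → q < N ∧ q' < N) ∧
      -- (2) each row reaches its assigned location
      (∀ ω ∈ S ∪ Splus ∪ R, ∃ tr, Run Δ (qvar [], 0) ω tr ∧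
        (endState (qvar [], 0) tr).1 = qvar ω) ∧
      -- (3) acceptance agrees with membership queries on rows
      (∀ ω ∈ S ∪ Splus ∪ R, (Accepted Δ (qvar []) acc ω ↔ MQ ω = true)) ∧
      -- (4) rows distinguished by `f` reach distinct locations
      (∀ ω₁ ∈ S ∪ Splus ∪ R, ∀ ω₂ ∈ S ∪ Splus ∪ R, ∀ i j,
        lastResetAssign bvar ω₁ i → lastResetAssign bvar ω₂ j →
        ¬ rowsEquiv MQ E ω₁ ω₂ i j →
        ∀ tr₁ tr₂, Run Δ (qvar [], 0) ω₁ tr₁ → Run Δ (qvar [], 0) ω₂ tr₂ →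
          (endState (qvar [], 0) tr₁).1 ≠ (endState (qvar [], 0) tr₂).1) :=
  hypothesis_properties_general MQ S Splus R E N κ hεE hpos hpc bvar qvar hbε hC1 hC2 hC3
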